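/- For every metric space X, the Nagata dimension of X equals the Nagata dimension of the metric completion of X. -/

import Mathlib

open Metric Set

/-- `X` has Nagata dimension at most `n` (witnessed by some constant `c > 0`):
for every `s > 0` there is a covering by sets of diameter `≤ c * s` such that every
set of diameter `≤ s` meets at most `n + 1` members of the covering. -/
def NagataProp (X : Type*) [MetricSpace X] (n : ℕ) : Prop :=
  ∃ c : ℝ, 0 < c ∧ ∀ s : ℝ, 0 < s → ∃ 𝓑 : Set (Set X),
    (⋃₀ 𝓑 = univ) ∧
    (∀ B ∈ 𝓑, EMetric.diam B ≤ ENNReal.ofReal (c * s)) ∧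
    (∀ E : Set X, EMetric.diam E ≤ ENNReal.ofReal s →
      ∃ T : Finset (Set X), T.card ≤ n + 1 ∧
        ∀ B ∈ 𝓑, (B ∩ E).Nonempty → B ∈ T)

/-- The Nagata (Assouad–Nagata) dimension of a metric space, as an element of `ℕ∞`. -/
noncomputable def nagataDim (X : Type*) [MetricSpace X] : ℕ∞ :=
  sInf {k : ℕ∞ | ∃ n : ℕ, k = n ∧ NagataProp X n}

/-!
Nagata dimension is invariant under passing to a dense isometric extension `f : X → Y`.
Pulling a cover of `Y` back along `f` gives a cover of `X` with the same constant. Conversely,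
given a cover of `X` at scale `2s`, thicken the image of each member by `s / 2`: by density these
sets cover `Y`, and their diameters grow by at most `s`. A set `E ⊆ Y` of diameter `≤ s` can only
meet a thickened member `B` if `B` meets `f ⁻¹' thickening (s / 2) E`, a set of diameter `≤ 2s`;
so the multiplicity bound persists, with constant `2c + 1`.
-/

theorem Isometry.ediam_preimage_le {X Y : Type*} [PseudoEMetricSpace X]
    [PseudoEMetricSpace Y] {f : X → Y} (hf : Isometry f) (S : Set Y) :
    ediam (f ⁻¹' S) ≤ ediam S := by
  rw [← hf.ediam_image]
  exact ediam_mono (image_preimage_subset f S)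

theorem ediam_thickening_half_le {Y : Type*} [PseudoMetricSpace Y] {s : ℝ} (hs : 0 ≤ s)
    (S : Set Y) :
    ediam (thickening (s / 2) S) ≤ ediam S + ENNReal.ofReal s := by
  have h := ediam_thickening_le (s := S) (s / 2).toNNReal
  rwa [Real.coe_toNNReal _ (by positivity), ← ENNReal.ofReal_coe_nnreal, Real.coe_toNNReal _
    (by positivity), ← ENNReal.ofReal_ofNat, ← ENNReal.ofReal_mul (by norm_num),
    mul_div_cancel₀ s two_ne_zero] at h

section DenseIsometry

variable {X Y : Type*} [MetricSpace X] [MetricSpace Y] {f : X → Y} {n : ℕ}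

theorem NagataProp.of_isometry (hf : Isometry f) (h : NagataProp Y n) : NagataProp X n := by
  classical
  obtain ⟨c, hc, H⟩ := h
  refine ⟨c, hc, fun s hs => ?_⟩
  obtain ⟨𝓑, hcover, hdiam, hmult⟩ := H s hs
  refine ⟨(f ⁻¹' ·) '' 𝓑, ?_, ?_, fun E hE => ?_⟩
  · refine eq_univ_of_forall fun x => ?_
    obtain ⟨B, hB, hxB⟩ := mem_sUnion.1 (hcover ▸ mem_univ (f x))
    exact ⟨_, mem_image_of_mem _ hB, hxB⟩
  · rintro _ ⟨B, hB, rfl⟩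
    exact (hf.ediam_preimage_le B).trans (hdiam B hB)
  · obtain ⟨T, hcard, hT⟩ := hmult (f '' E) (by rwa [EMetric.diam, hf.ediam_image])
    refine ⟨T.image (f ⁻¹' ·), Finset.card_image_le.trans hcard, ?_⟩
    rintro _ ⟨B, hB, rfl⟩ ⟨x, hxB, hxE⟩
    exact Finset.mem_image_of_mem _ (hT B hB ⟨f x, hxB, mem_image_of_mem f hxE⟩)

theorem NagataProp.of_isometry_of_denseRange (hf : Isometry f) (hd : DenseRange f)
    (h : NagataProp X n) : NagataProp Y n := by
  classical
  obtain ⟨c, hc, H⟩ := h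
  refine ⟨2 * c + 1, by positivity, fun s hs => ?_⟩
  obtain ⟨𝓑, hcover, hdiam, hmult⟩ := H (2 * s) (by positivity)
  let thick : Set X → Set Y := fun B => thickening (s / 2) (f '' B)
  refine ⟨thick '' 𝓑, ?_, ?_, fun E hE => ?_⟩
  · refine eq_univ_of_forall fun y => ?_
    obtain ⟨x, hx⟩ := hd.exists_dist_lt y (half_pos hs)
    obtain ⟨B, hB, hxB⟩ := mem_sUnion.1 (hcover ▸ mem_univ x)
    exact ⟨_, mem_image_of_mem _ hB, mem_thickening_iff.2 ⟨f x, mem_image_of_mem f hxB, hx⟩⟩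
  · rintro _ ⟨B, hB, rfl⟩
    calc ediam (thick B) ≤ ediam (f '' B) + ENNReal.ofReal s := ediam_thickening_half_le hs.le _
      _ = ediam B + ENNReal.ofReal s := by rw [hf.ediam_image]
      _ ≤ ENNReal.ofReal (c * (2 * s)) + ENNReal.ofReal s := by gcongr; exact hdiam B hB
      _ = ENNReal.ofReal ((2 * c + 1) * s) := by
        rw [← ENNReal.ofReal_add (by positivity) hs.le]; ring_nf
  · have hE' : ediam (f ⁻¹' thickening (s / 2) E) ≤ ENNReal.ofReal (2 * s) :=
      calc ediam (f ⁻¹' thickening (s / 2) E)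
          ≤ ediam E + ENNReal.ofReal s :=
            (hf.ediam_preimage_le _).trans (ediam_thickening_half_le hs.le E)
        _ ≤ ENNReal.ofReal s + ENNReal.ofReal s := by gcongr; exact hE
        _ = ENNReal.ofReal (2 * s) := by rw [← ENNReal.ofReal_add hs.le hs.le, two_mul]
    obtain ⟨T, hcard, hT⟩ := hmult _ hE'
    refine ⟨T.image thick, Finset.card_image_le.trans hcard, ?_⟩
    rintro _ ⟨B, hB, rfl⟩ ⟨y, hyB, hyE⟩
    obtain ⟨_, ⟨x, hxB, rfl⟩, hyx⟩ := mem_thickening_iff.1 hyB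
    have hxE : f x ∈ thickening (s / 2) E := mem_thickening_iff.2 ⟨y, hyE, by rwa [dist_comm]⟩
    exact Finset.mem_image_of_mem _ (hT B hB ⟨x, hxB, hxE⟩)

theorem nagataDim_congr (h : ∀ n, NagataProp X n ↔ NagataProp Y n) :
    nagataDim X = nagataDim Y := by
  simp only [nagataDim, h]

end DenseIsometry

theorem nagataDim_completion (X : Type*) [MetricSpace X] :
    nagataDim X = nagataDim (UniformSpace.Completion X) :=
  nagataDim_congr fun _ =>
    ⟨.of_isometry_of_denseRange UniformSpace.Completion.coe_isometry
      UniformSpace.Completion.denseRange_coe, .of_isometry UniformSpace.Completion.coe_isometry⟩
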